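/- Let m divide Ū_n for some n ≥ 1, where Ū is the normalized Lucas sequence with parameters √R, Q and gcd(m, Q) = 1. Then the rank of apparition ω(m) exists and ω(m) divides n. -/

import Mathlib

/-!
The addition formula `U (a + b + 1) = U (a + 1) * U (b + 1) - Q * U a * U b` shows that
`m ∣ U (a + 1)` and `m ∣ U (a + 1 + b)` give `m ∣ U (a + 2) * U (b + 1)`, and Cassini's
identity `U (a + 2) * U a - U (a + 1) ^ 2 = -Q ^ a` makes `U (a + 2)` coprime to `m`, since `m`
is coprime to `Q`. So the indices `k` with `m ∣ U k` are closed under subtraction, and such a set of naturals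
consists of the multiples of its least positive element.
-/

/-- The Lucas sequence with parameters `P = √R`, `Q` in `ℤ[√R]`. -/
def lucasU (R Q : ℤ) : ℕ → Zsqrtd R
  | 0 => 0
  | 1 => 1
  | n + 2 => Zsqrtd.sqrtd * lucasU R Q (n + 1) - (Q : Zsqrtd R) * lucasU R Q n

/-- The normalized (integer) Lucas sequence: `U n / √R` if `n` even, `U n` if `n` odd. -/
def Ubar (R Q : ℤ) (n : ℕ) : ℤ :=
  if Even n then (lucasU R Q n).im else (lucasU R Q n).re

theorem Nat.dvd_of_isLeast_of_forall_sub {P : ℕ → Prop} {ω n : ℕ}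
    (hω : IsLeast {k | 0 < k ∧ P k} ω) (hsub : ∀ a b, 0 < a → P a → P (a + b) → P b)
    (hn : P n) : ω ∣ n := by
  induction n using Nat.strong_induction_on with
  | _ n ih =>
    obtain ⟨⟨hω_pos, hPω⟩, hω_min⟩ := hω
    rcases lt_or_ge n ω with hlt | hle
    · obtain rfl | hn_pos := n.eq_zero_or_pos
      · exact dvd_zero ω
      · exact absurd (hω_min ⟨hn_pos, hn⟩) (not_le.mpr hlt)
    · have hrest : P (n - ω) := hsub ω (n - ω) hω_pos hPω (by rwa [Nat.add_sub_cancel' hle])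
      have hdvd :=
        dvd_add (dvd_refl ω) (ih (n - ω) (Nat.sub_lt (hω_pos.trans_le hle) hω_pos) hrest)
      rwa [Nat.add_sub_cancel' hle] at hdvd

namespace lucasU

variable (R Q : ℤ)

@[simp] lemma zero : lucasU R Q 0 = 0 := rfl

@[simp] lemma one : lucasU R Q 1 = 1 := rfl

lemma add_two (n : ℕ) :
    lucasU R Q (n + 2) = Zsqrtd.sqrtd * lucasU R Q (n + 1) - (Q : Zsqrtd R) * lucasU R Q n :=
  rfl

lemma add_add_one (a b : ℕ) :
    lucasU R Q (a + b + 1) =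
      lucasU R Q (a + 1) * lucasU R Q (b + 1) - (Q : Zsqrtd R) * lucasU R Q a * lucasU R Q b := by
  induction b using Nat.twoStepInduction with
  | zero => simp
  | one =>
    simp only [add_two, Nat.reduceAdd, zero_add, one, mul_one, zero, mul_zero, sub_zero, sub_left_inj]
    ring
  | more c ih₁ ih₂ =>
    rw [show a + (c + 2) + 1 = a + c + 1 + 2 by ring, add_two,
      show a + c + 1 + 1 = a + (c + 1) + 1 by ring, ih₂, ih₁,
      show c + 2 + 1 = c + 1 + 2 by ring, add_two R Q (c + 1), add_two R Q c]
    ring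

lemma cassini (n : ℕ) :
    lucasU R Q (n + 2) * lucasU R Q n - lucasU R Q (n + 1) ^ 2 = -(Q : Zsqrtd R) ^ n := by
  induction n with
  | zero => simp [add_two]
  | succ k ih =>
    rw [add_two R Q (k + 1)]
    linear_combination (Q : Zsqrtd R) * ih - lucasU R Q (k + 2) * add_two R Q k

lemma isCoprime_add_two {c : Zsqrtd R} (hcQ : IsCoprime c (Q : Zsqrtd R)) {a : ℕ}
    (hc : c ∣ lucasU R Q (a + 1)) : IsCoprime c (lucasU R Q (a + 2)) := by
  obtain ⟨x, y, hxy⟩ := hcQ.pow_right (n := a)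
  obtain ⟨w, hw⟩ := hc
  have hQ : (Q : Zsqrtd R) ^ a = c * (c * w ^ 2) - lucasU R Q a * lucasU R Q (a + 2) := by
    linear_combination cassini R Q a + (c * w + lucasU R Q (a + 1)) * hw
  exact ⟨x + y * c * w ^ 2, -(y * lucasU R Q a), by linear_combination hxy - y * hQ⟩

lemma dvd_of_dvd_add {c : Zsqrtd R} (hcQ : IsCoprime c (Q : Zsqrtd R)) {a b : ℕ}
    (ha : c ∣ lucasU R Q (a + 1)) (hab : c ∣ lucasU R Q (a + 1 + b)) : c ∣ lucasU R Q b := by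
  cases b with
  | zero => simp
  | succ b =>
    rw [← add_assoc, add_add_one] at hab
    have hprod : c ∣ lucasU R Q (a + 2) * lucasU R Q (b + 1) := by
      simpa using dvd_add hab ((ha.mul_left (Q : Zsqrtd R)).mul_right (lucasU R Q b))
    exact (isCoprime_add_two R Q hcQ ha).dvd_of_dvd_mul_left hprod

lemma re_eq_zero_of_even_and_im_eq_zero_of_odd (n : ℕ) :
    (Even n → (lucasU R Q n).re = 0) ∧ (¬Even n → (lucasU R Q n).im = 0) := by
  induction n using Nat.twoStepInduction with
  | zero => simp
  | one => simp
  | more k ih₁ ih₂ =>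
    rw [add_two]
    by_cases hk : Even k
    · have hk₁ : ¬Even (k + 1) := Nat.not_even_iff_odd.mpr hk.add_one
      simp [hk, Nat.even_add, ih₂.2 hk₁, ih₁.1 hk]
    · have hk₁ : Even (k + 1) := (Nat.not_even_iff_odd.mp hk).add_one
      simp [hk, Nat.even_add, ih₂.1 hk₁, ih₁.2 hk]

lemma intCast_dvd_iff_dvd_ubar (m : ℤ) (n : ℕ) :
    (m : Zsqrtd R) ∣ lucasU R Q n ↔ m ∣ Ubar R Q n := by
  rw [Zsqrtd.intCast_dvd, Ubar]
  obtain ⟨he, ho⟩ := re_eq_zero_of_even_and_im_eq_zero_of_odd R Q n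
  by_cases hn : Even n <;> simp [hn, he, ho]

end lucasU

theorem rank_of_apparition_dvd_general (R Q : ℤ) (m : ℤ)
    (hmQ : IsCoprime m Q) (n : ℕ) (hn : 1 ≤ n) (hdvd : m ∣ Ubar R Q n) :
    ∃ ω : ℕ, IsLeast {k : ℕ | 0 < k ∧ m ∣ Ubar R Q k} ω ∧ ω ∣ n := by
  have hcQ : IsCoprime (m : Zsqrtd R) (Q : Zsqrtd R) := hmQ.intCast
  have hsub : ∀ a b, 0 < a → m ∣ Ubar R Q a → m ∣ Ubar R Q (a + b) → m ∣ Ubar R Q b := by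
    intro a b ha
    obtain ⟨a, rfl⟩ := Nat.exists_eq_add_of_le' ha
    simp only [← lucasU.intCast_dvd_iff_dvd_ubar]
    exact lucasU.dvd_of_dvd_add R Q hcQ
  have hω := isLeast_csInf (⟨n, hn, hdvd⟩ : {k : ℕ | 0 < k ∧ m ∣ Ubar R Q k}.Nonempty)
  exact ⟨_, hω, Nat.dvd_of_isLeast_of_forall_sub hω hsub hdvd⟩

theorem rank_of_apparition_dvd (R Q : ℤ) (hRQ : IsCoprime R Q) (m : ℤ)
    (hmQ : IsCoprime m Q) (n : ℕ) (hn : 1 ≤ n) (hdvd : m ∣ Ubar R Q n) :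
    ∃ ω : ℕ, IsLeast {k : ℕ | 0 < k ∧ m ∣ Ubar R Q k} ω ∧ ω ∣ n :=
  rank_of_apparition_dvd_general R Q m hmQ n hn hdvd
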